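/- arXiv:1304.0201 — 5 statements merged into one kernel-verified Lean document; each statement's English description precedes it below -/
import Mathlib

section
/- Let $F$ be an ordered field with canonical (natural) valuation $v$, and let $D, E \subseteq F$ with $D$ an initial segment of $F$ or $E$ a final segment of $F$. Then the set $v(E-D) := \{v(e-d) : e \in E, d \in D\}$ is an initial segment of $vF \cup \{\infty\}$. -/
open Set

section Val
variable {F : Type*} [Field F] [LinearOrder F] [IsStrictOrderedRing F]

/-- `vle a b` encodes `v a ≤ v b` for the canonical (natural) valuation `v` of the ordered
field `F` (whose valuation ring is the convex hull of `ℤ`): the valuation of `a` is at most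
that of `b` iff `|b|` is bounded by an integer multiple of `|a|`.  (`v 0 = ∞` is the largest
value.) -/
def vle (a b : F) : Prop := ∃ n : ℕ, |b| ≤ (n : F) * |a|

/-- `veq a b` encodes `v a = v b`. -/
def veq (a b : F) : Prop := vle a b ∧ vle b a

/-- `vlt a b` encodes `v a < v b`. -/
def vlt (a b : F) : Prop := vle a b ∧ ¬ vle b a

/-- A subset `S ⊆ F` encoding a final segment `S'` of the value group `vF` together with `∞`:
`S = {x | v x ∈ S' ∪ {∞}}`.  Equivalently: `0 ∈ S` and `S` is closed under increasing the
valuation. -/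
def IsValFinalSegment (S : Set F) : Prop :=
  (0 : F) ∈ S ∧ ∀ x ∈ S, ∀ y : F, vle x y → y ∈ S

/-- The ball `B_S(a,F) = {b | v(a-b) ∈ S ∪ {∞}}`, where the final segment `S ∪ {∞}` of
`vF ∪ {∞}` is encoded as a subset of `F` as in `IsValFinalSegment`. -/
def vball (S : Set F) (a : F) : Set F := {b | a - b ∈ S}

/-- A ball in `F` with respect to the canonical valuation. -/
def IsBall (B : Set F) : Prop := ∃ (a : F) (S : Set F), IsValFinalSegment S ∧ B = vball S a

end Val

/-!
If `v x ≤ v (e - d)`, then `|e - d| + |x|` has the same valuation as `x`. Moving `d` down to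
`e - |e - d| - |x|` (which stays in `D` when `D` is a lower set), or `e` up to
`d + |e - d| + |x|` (which stays in `E` when `E` is an upper set), realises exactly this difference.
-/

section Val
variable {F : Type*} [Field F] [LinearOrder F]

theorem vle_refl (a : F) : vle a a := ⟨1, by rw [Nat.cast_one, one_mul]⟩

theorem vle_of_abs_le {a b : F} (h : |b| ≤ |a|) : vle a b :=
  ⟨1, by rwa [Nat.cast_one, one_mul]⟩

variable [IsStrictOrderedRing F]

@[simp]
theorem vle_abs_right {a b : F} : vle a |b| ↔ vle a b := by simp only [vle, abs_abs]

theorem vle.add {a b c : F} (hb : vle a b) (hc : vle a c) : vle a (b + c) := by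
  obtain ⟨n, hn⟩ := hb
  obtain ⟨m, hm⟩ := hc
  refine ⟨n + m, ?_⟩
  calc |b + c| ≤ |b| + |c| := abs_add_le b c
    _ ≤ n * |a| + m * |a| := add_le_add hn hm
    _ = ((n + m : ℕ) : F) * |a| := by push_cast; ring

theorem veq_abs_add_abs_of_vle {x y : F} (h : vle x y) : veq (|y| + |x|) x :=
  ⟨vle_of_abs_le (by
      rw [abs_of_nonneg (add_nonneg (abs_nonneg y) (abs_nonneg x))]
      exact le_add_of_nonneg_left (abs_nonneg y)),
    (vle_abs_right.2 h).add (vle_abs_right.2 (vle_refl x))⟩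

end Val

/-- if `D` is an initial segment of `F` or `E` is a final segment of `F`, then
`v(E - D) = {v(e - d) : e ∈ E, d ∈ D}` is an initial segment of `vF ∪ {∞}`: together with any
value `v(e-d)` it contains every value `v x ≤ v(e-d)` that is attained in `F`. -/
theorem vSub_isInitialSegment {F : Type*} [Field F] [LinearOrder F] [IsStrictOrderedRing F] (D E : Set F)
    (h : IsLowerSet D ∨ IsUpperSet E) :
    ∀ e ∈ E, ∀ d ∈ D, ∀ x : F, vle x (e - d) →
      ∃ e' ∈ E, ∃ d' ∈ D, veq (e' - d') x := by
  intro e he d hd x hx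
  have hveq := veq_abs_add_abs_of_vle hx
  have hsub : e - d ≤ |e - d| + |x| :=
    (le_abs_self _).trans (le_add_of_nonneg_right (abs_nonneg x))
  rcases h with hD | hE
  · refine ⟨e, he, e - (|e - d| + |x|), hD (by linarith) hd, ?_⟩
    rwa [sub_sub_cancel]
  · refine ⟨d + (|e - d| + |x|), hE (by linarith) he, d, hd, ?_⟩
    rwa [add_sub_cancel_left]
end

section
/- Let $F$ be an ordered field with canonical valuation $v$, let $S$ be a final segment of the value group $vF$, let $a \in F$, and let $B = B_S(a,F) = \{b \in F : v(a-b) \in S \cup \{\infty\}\}$. If $(D,E)$ is a ball complement for $B$ (i.e., $D < B < E$ and $F = D \cup B \cup E$), then $v(E-D) = v(E-B) = v(B-D) = vF \setminus S$. -/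
open Set

/-!
A ball `B = B_S(a,F)` is closed under differences with value in `S`, so a difference between
a point of `B` and a point outside it has value outside `S`; since `D < B < E`, the same holds
for `e - d`, which dominates `a - d`. Conversely, for `v x ∉ S` the points `a ± |x|` lie outside
`B`, hence in `E` and `D` respectively, and the differences of `a - |x|`, `a`, `a + |x|` all have
value `v x`.
-/

structure IsBallComplement {α : Type*} [Preorder α] (D B E : Set α) : Prop where
  left_lt : ∀ d ∈ D, ∀ b ∈ B, d < b
  lt_right : ∀ b ∈ B, ∀ e ∈ E, b < e
  union_eq_univ : D ∪ B ∪ E = univ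

namespace IsBallComplement

variable {α : Type*} [Preorder α] {D B E : Set α}

theorem notMem_of_mem_left (h : IsBallComplement D B E) {d : α} (hd : d ∈ D) : d ∉ B :=
  fun hdB => lt_irrefl d (h.left_lt d hd d hdB)

theorem notMem_of_mem_right (h : IsBallComplement D B E) {e : α} (he : e ∈ E) : e ∉ B :=
  fun heB => lt_irrefl e (h.lt_right e heB e he)

theorem mem_right_of_lt (h : IsBallComplement D B E) {b c : α} (hb : b ∈ B) (hbc : b < c)
    (hc : c ∉ B) : c ∈ E := by
  have hcov : c ∈ D ∪ B ∪ E := h.union_eq_univ ▸ mem_univ c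
  rcases hcov with (hcD | hcB) | hcE
  · exact absurd (h.left_lt c hcD b hb) hbc.not_gt
  · exact absurd hcB hc
  · exact hcE

theorem mem_left_of_lt (h : IsBallComplement D B E) {b c : α} (hb : b ∈ B) (hcb : c < b)
    (hc : c ∉ B) : c ∈ D := by
  have hcov : c ∈ D ∪ B ∪ E := h.union_eq_univ ▸ mem_univ c
  rcases hcov with (hcD | hcB) | hcE
  · exact hcD
  · exact absurd hcB hc
  · exact absurd (h.lt_right b hb c hcE) hcb.not_gt

end IsBallComplement

section Valuation

variable {F : Type*} [Field F] [LinearOrder F]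

theorem vle_of_abs_le_s2 {x y : F} (h : |y| ≤ |x|) : vle x y :=
  ⟨1, by simpa using h⟩

namespace IsValFinalSegment

variable {S : Set F}

theorem mem_of_abs_le (hS : IsValFinalSegment S) {x y : F} (hx : x ∈ S) (h : |y| ≤ |x|) :
    y ∈ S :=
  hS.2 x hx y (vle_of_abs_le_s2 h)

theorem neg_mem (hS : IsValFinalSegment S) {x : F} (hx : x ∈ S) : -x ∈ S :=
  hS.mem_of_abs_le hx (abs_neg x).le

theorem ne_zero_of_notMem (hS : IsValFinalSegment S) {x : F} (hx : x ∉ S) : x ≠ 0 :=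
  fun h => hx (h ▸ hS.1)

theorem center_mem_vball (hS : IsValFinalSegment S) (a : F) : a ∈ vball S a := by
  simpa [vball] using hS.1

end IsValFinalSegment

variable [IsStrictOrderedRing F]

theorem veq_abs_self (x : F) : veq |x| x :=
  ⟨vle_of_abs_le_s2 (abs_abs x).ge, vle_of_abs_le_s2 (abs_abs x).le⟩

theorem veq_two_mul_abs (x : F) : veq (2 * |x|) x := by
  have h2x : abs (2 * |x|) = 2 * |x| := abs_of_nonneg (by positivity)
  refine ⟨vle_of_abs_le_s2 ?_, ⟨2, ?_⟩⟩
  · rw [h2x]; linarith [abs_nonneg x]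
  · rw [h2x]; push_cast; rfl

namespace IsValFinalSegment

variable {S : Set F}

theorem abs_mem_iff (hS : IsValFinalSegment S) {x : F} : |x| ∈ S ↔ x ∈ S :=
  ⟨fun h => hS.mem_of_abs_le h (abs_abs x).ge, fun h => hS.mem_of_abs_le h (abs_abs x).le⟩

theorem add_mem (hS : IsValFinalSegment S) {x y : F} (hx : x ∈ S) (hy : y ∈ S) :
    x + y ∈ S := by
  wlog hxy : |x| ≤ |y| generalizing x y
  · rw [add_comm]; exact this hy hx (le_of_not_ge hxy)
  refine hS.2 y hy _ ⟨2, ?_⟩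
  push_cast
  linarith [abs_add_le x y]

theorem sub_notMem_of_mem_vball (hS : IsValFinalSegment S) {a b c : F} (hb : b ∈ vball S a)
    (hc : c ∉ vball S a) : b - c ∉ S :=
  fun hbc => hc (by simpa [vball] using hS.add_mem hb hbc)

theorem sub_notMem_of_mem_vball' (hS : IsValFinalSegment S) {a b c : F} (hb : b ∈ vball S a)
    (hc : c ∉ vball S a) : c - b ∉ S :=
  fun hcb => hS.sub_notMem_of_mem_vball hb hc (by simpa using hS.neg_mem hcb)

variable {a : F} {D E : Set F}

theorem sub_notMem_of_mem_left_of_mem_right (hS : IsValFinalSegment S)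
    (hB : IsBallComplement D (vball S a) E) {d e : F} (hd : d ∈ D) (he : e ∈ E) :
    e - d ∉ S := by
  have hda := hB.left_lt d hd a (hS.center_mem_vball a)
  have hae := hB.lt_right a (hS.center_mem_vball a) e he
  intro hed
  refine hS.sub_notMem_of_mem_vball (hS.center_mem_vball a) (hB.notMem_of_mem_left hd)
    (hS.mem_of_abs_le hed ?_)
  rw [abs_of_pos (sub_pos.2 hda), abs_of_pos (by linarith)]
  linarith

theorem add_abs_mem_right (hS : IsValFinalSegment S) (hB : IsBallComplement D (vball S a) E)
    {x : F} (hxS : x ∉ S) : a + |x| ∈ E := by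
  refine hB.mem_right_of_lt (hS.center_mem_vball a) (by simpa using hS.ne_zero_of_notMem hxS)
    fun h => hxS ?_
  have h' : -|x| ∈ S := by simpa [vball] using h
  exact hS.abs_mem_iff.1 (by simpa using hS.neg_mem h')

theorem sub_abs_mem_left (hS : IsValFinalSegment S) (hB : IsBallComplement D (vball S a) E)
    {x : F} (hxS : x ∉ S) : a - |x| ∈ D := by
  refine hB.mem_left_of_lt (hS.center_mem_vball a) (by simpa using hS.ne_zero_of_notMem hxS)
    fun h => hxS ?_
  exact hS.abs_mem_iff.1 (by simpa [vball] using h)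

end IsValFinalSegment

end Valuation

/-- if `(D,E)` is a ball complement for the ball `B = B_S(a,F)`, then
`v(E-D) = v(E-B) = v(B-D) = vF \\ S`.  Each of the three set equalities is expressed
elementwise: differences have value outside `S` (and are nonzero, i.e. have value `≠ ∞`),
and every nonzero `x` with `v x ∉ S` has the same value as some difference. -/
theorem ballComplement_values {F : Type*} [Field F] [LinearOrder F] [IsStrictOrderedRing F] (S : Set F)
    (hS : IsValFinalSegment S) (a : F) (D E : Set F)
    (hDB : ∀ d ∈ D, ∀ b ∈ vball S a, d < b)
    (hBE : ∀ b ∈ vball S a, ∀ e ∈ E, b < e)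
    (hcover : D ∪ vball S a ∪ E = Set.univ) :
    ((∀ e ∈ E, ∀ d ∈ D, e - d ≠ 0 ∧ e - d ∉ S) ∧
      ∀ x : F, x ≠ 0 → x ∉ S → ∃ e ∈ E, ∃ d ∈ D, veq (e - d) x) ∧
    ((∀ e ∈ E, ∀ b ∈ vball S a, e - b ≠ 0 ∧ e - b ∉ S) ∧
      ∀ x : F, x ≠ 0 → x ∉ S → ∃ e ∈ E, ∃ b ∈ vball S a, veq (e - b) x) ∧
    ((∀ b ∈ vball S a, ∀ d ∈ D, b - d ≠ 0 ∧ b - d ∉ S) ∧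
      ∀ x : F, x ≠ 0 → x ∉ S → ∃ b ∈ vball S a, ∃ d ∈ D, veq (b - d) x) := by
  have hB : IsBallComplement D (vball S a) E := ⟨hDB, hBE, hcover⟩
  have ha := hS.center_mem_vball a
  have hED : ∀ e ∈ E, ∀ d ∈ D, e - d ≠ 0 ∧ e - d ∉ S := fun e he d hd =>
    ⟨sub_ne_zero.2 (hDB d hd a ha |>.trans (hBE a ha e he)).ne',
      hS.sub_notMem_of_mem_left_of_mem_right hB hd he⟩
  have hEB : ∀ e ∈ E, ∀ b ∈ vball S a, e - b ≠ 0 ∧ e - b ∉ S := fun e he b hb =>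
    ⟨sub_ne_zero.2 (hBE b hb e he).ne',
      hS.sub_notMem_of_mem_vball' hb (hB.notMem_of_mem_right he)⟩
  have hBD : ∀ b ∈ vball S a, ∀ d ∈ D, b - d ≠ 0 ∧ b - d ∉ S := fun b hb d hd =>
    ⟨sub_ne_zero.2 (hDB d hd b hb).ne',
      hS.sub_notMem_of_mem_vball hb (hB.notMem_of_mem_left hd)⟩
  refine ⟨⟨hED, fun x _ hxS => ?_⟩, ⟨hEB, fun x _ hxS => ?_⟩, ⟨hBD, fun x _ hxS => ?_⟩⟩
  · refine ⟨a + |x|, hS.add_abs_mem_right hB hxS, a - |x|, hS.sub_abs_mem_left hB hxS, ?_⟩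
    convert veq_two_mul_abs x using 1
    ring
  · refine ⟨a + |x|, hS.add_abs_mem_right hB hxS, a, ha, ?_⟩
    simpa using veq_abs_self x
  · refine ⟨a, ha, a - |x|, hS.sub_abs_mem_left hB hxS, ?_⟩
    simpa using veq_abs_self x
end

section
/- Let $K \subseteq L$ be fields, and suppose $\xi$ is a $K$-rational place of $L$, i.e., a place of $L$ that is trivial (identity) on $K$ with residue field $K$ (image $K \cup \{\infty\}$). Then the map $\iota: M(K) \to M(L)$ defined by $\iota(\zeta) = \zeta \circ \xi$ is a continuous embedding compatible with restriction, i.e., $\iota$ is injective, continuous, and $\iota(\zeta)|_K = \zeta$ for all $\zeta \in M(K)$. -/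
open Set

section Places
open scoped Classical

/-- A place of the field `L` with values in the field `K` (together with `∞ = ⊤`):
it maps `1` to `1`, is additive and multiplicative on elements with finite value, and
elements with value `∞` are nonzero with inverse of value `0`. -/
def IsPlaceFun {L K : Type*} [Field L] [Field K] (f : L → WithTop K) : Prop :=
  f 1 = 1 ∧
  (∀ x y : L, f x ≠ ⊤ → f y ≠ ⊤ → f (x + y) = f x + f y) ∧
  (∀ x y : L, f x ≠ ⊤ → f y ≠ ⊤ → f (x * y) = f x * f y) ∧
  ∀ x : L, f x = ⊤ → x ≠ 0 ∧ f x⁻¹ = 0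

/-- Composition of places: `ζ ∘ ξ`, with `ζ(∞) = ∞`. -/
def placeComp {L K : Type*} [Field L] [Field K] (zeta : K → WithTop ℝ)
    (xi : L → WithTop K) : L → WithTop ℝ :=
  fun x => WithTop.recTopCoe ⊤ zeta (xi x)

/-- The space `M(K)` of `ℝ`-places of `K`: places `K → ℝ ∪ {∞}`. -/
def RPlaces (K : Type*) [Field K] : Type _ := {f : K → WithTop ℝ // IsPlaceFun f}

/-- The subbasic open set `H'(b) = {ζ ∈ M(K) | ∞ ≠ ζ(b) > 0}`. -/
def Hpos {K : Type*} [Field K] (b : K) : Set (RPlaces K) :=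
  {zeta : RPlaces K | ∃ r : ℝ, 0 < r ∧ zeta.1 b = (r : WithTop ℝ)}

/-- The topology on `M(K)` generated by the subbasic sets `H'(b)`, `b ∈ K`. -/
instance (K : Type*) [Field K] : TopologicalSpace (RPlaces K) :=
  TopologicalSpace.generateFrom {U | ∃ b : K, U = Hpos b}

end Places

/-!
Since `ξ` takes its finite values in `K`, the composite `ζ ∘ ξ` is again an `ℝ`-place, and
the preimage of a subbasic set `H'(b)` under `ζ ↦ ζ ∘ ξ` is `H'(ξ b)` when `ξ b` is finite and
empty when `ξ b = ∞`, which gives continuity. As `ξ` is the identity on `K`, `ζ ∘ ξ` restricts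
to `ζ` on `K`, which gives injectivity.
-/

namespace IsPlaceFun

open scoped Classical

variable {L K : Type*} [Field L] [Field K] {f : L → WithTop K} {x y : L} {a b : K}

theorem map_one (hf : IsPlaceFun f) : f 1 = 1 := hf.1

theorem map_add_of_ne_top (hf : IsPlaceFun f) (hx : f x ≠ ⊤) (hy : f y ≠ ⊤) :
    f (x + y) = f x + f y :=
  hf.2.1 x y hx hy

theorem map_mul_of_ne_top (hf : IsPlaceFun f) (hx : f x ≠ ⊤) (hy : f y ≠ ⊤) :
    f (x * y) = f x * f y :=
  hf.2.2.1 x y hx hy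

theorem ne_zero_of_eq_top (hf : IsPlaceFun f) (hx : f x = ⊤) : x ≠ 0 :=
  (hf.2.2.2 x hx).1

theorem map_inv_of_eq_top (hf : IsPlaceFun f) (hx : f x = ⊤) : f x⁻¹ = 0 :=
  (hf.2.2.2 x hx).2

theorem map_add (hf : IsPlaceFun f) (hx : f x = a) (hy : f y = b) : f (x + y) = ↑(a + b) := by
  rw [hf.map_add_of_ne_top (by simp [hx]) (by simp [hy]), hx, hy, WithTop.coe_add]

theorem map_mul (hf : IsPlaceFun f) (hx : f x = a) (hy : f y = b) : f (x * y) = ↑(a * b) := by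
  rw [hf.map_mul_of_ne_top (by simp [hx]) (by simp [hy]), hx, hy, WithTop.coe_mul]

theorem map_zero (hf : IsPlaceFun f) : f 0 = 0 := by
  obtain ⟨a, ha⟩ := WithTop.ne_top_iff_exists.mp fun h => hf.ne_zero_of_eq_top h rfl
  have h := hf.map_add (x := 1) (hf.map_one.trans WithTop.coe_one.symm) ha.symm
  rw [add_zero, hf.map_one, ← WithTop.coe_one, WithTop.coe_inj] at h
  rw [← ha, left_eq_add.mp h, WithTop.coe_zero]

theorem ne_zero_of_eq_coe (hf : IsPlaceFun f) (hx : f x = a) (ha : a ≠ 0) : x ≠ 0 := by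
  rintro rfl
  rw [hf.map_zero, ← WithTop.coe_zero, WithTop.coe_inj] at hx
  exact ha hx.symm

theorem map_inv_of_eq_coe (hf : IsPlaceFun f) (hx : f x = a) (ha : a ≠ 0) :
    f x⁻¹ = ↑a⁻¹ := by
  have hinv : f x⁻¹ ≠ ⊤ := fun h => by
    have h0 := hf.map_inv_of_eq_top h
    rw [inv_inv, hx, ← WithTop.coe_zero, WithTop.coe_inj] at h0
    exact ha h0
  obtain ⟨b, hb⟩ := WithTop.ne_top_iff_exists.mp hinv
  have hab := hf.map_mul hx hb.symm
  rw [mul_inv_cancel₀ (hf.ne_zero_of_eq_coe hx ha), hf.map_one, ← WithTop.coe_one,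
    WithTop.coe_inj] at hab
  rw [← hb, inv_eq_of_mul_eq_one_right hab.symm]

end IsPlaceFun

section PlaceComp

variable {L K : Type*} [Field L] [Field K] {zeta : K → WithTop ℝ} {xi : L → WithTop K}
  {x : L} {a : K}

@[simp]
theorem placeComp_of_eq_top (h : xi x = ⊤) : placeComp zeta xi x = ⊤ := by
  simp [placeComp, h]

@[simp]
theorem placeComp_of_eq_coe (h : xi x = a) : placeComp zeta xi x = zeta a := by
  simp [placeComp, h]

theorem exists_eq_coe_of_placeComp_ne_top (h : placeComp zeta xi x ≠ ⊤) :
    ∃ a : K, xi x = a ∧ placeComp zeta xi x = zeta a := by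
  obtain ⟨a, ha⟩ := WithTop.ne_top_iff_exists.mp fun htop => h (placeComp_of_eq_top htop)
  exact ⟨a, ha.symm, placeComp_of_eq_coe ha.symm⟩

theorem IsPlaceFun.comp (hzeta : IsPlaceFun zeta) (hxi : IsPlaceFun xi) :
    IsPlaceFun (placeComp zeta xi) := by
  refine ⟨?_, ?_, ?_, ?_⟩
  · rw [placeComp_of_eq_coe (hxi.map_one.trans WithTop.coe_one.symm), hzeta.map_one]
  · intro x y hx hy
    obtain ⟨a, ha, hxa⟩ := exists_eq_coe_of_placeComp_ne_top hx
    obtain ⟨b, hb, hyb⟩ := exists_eq_coe_of_placeComp_ne_top hy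
    rw [hxa] at hx ⊢
    rw [hyb] at hy ⊢
    rw [placeComp_of_eq_coe (hxi.map_add ha hb), hzeta.map_add_of_ne_top hx hy]
  · intro x y hx hy
    obtain ⟨a, ha, hxa⟩ := exists_eq_coe_of_placeComp_ne_top hx
    obtain ⟨b, hb, hyb⟩ := exists_eq_coe_of_placeComp_ne_top hy
    rw [hxa] at hx ⊢
    rw [hyb] at hy ⊢
    rw [placeComp_of_eq_coe (hxi.map_mul ha hb), hzeta.map_mul_of_ne_top hx hy]
  · intro x hx
    cases hxi_x : xi x with
    | top =>
      refine ⟨hxi.ne_zero_of_eq_top hxi_x, ?_⟩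
      rw [placeComp_of_eq_coe ((hxi.map_inv_of_eq_top hxi_x).trans WithTop.coe_zero.symm),
        hzeta.map_zero]
    | coe a =>
      rw [placeComp_of_eq_coe hxi_x] at hx
      have ha : a ≠ 0 := hzeta.ne_zero_of_eq_top hx
      exact ⟨hxi.ne_zero_of_eq_coe hxi_x ha,
        (placeComp_of_eq_coe (hxi.map_inv_of_eq_coe hxi_x ha)).trans
          (hzeta.map_inv_of_eq_top hx)⟩

end PlaceComp

namespace RPlaces

variable {L K : Type*} [Field L] [Field K] {xi : L → WithTop K}

def compPlace (hxi : IsPlaceFun xi) (zeta : RPlaces K) : RPlaces L :=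
  ⟨placeComp zeta.1 xi, zeta.2.comp hxi⟩

theorem isOpen_Hpos (b : K) : IsOpen (Hpos b) :=
  TopologicalSpace.isOpen_generateFrom_of_mem ⟨b, rfl⟩

theorem preimage_compPlace_Hpos_of_eq_coe (hxi : IsPlaceFun xi) {b : L} {a : K}
    (hb : xi b = a) : compPlace hxi ⁻¹' Hpos b = Hpos a := by
  ext zeta
  simp [Hpos, compPlace, placeComp_of_eq_coe hb]

theorem preimage_compPlace_Hpos_of_eq_top (hxi : IsPlaceFun xi) {b : L} (hb : xi b = ⊤) :
    compPlace hxi ⁻¹' Hpos b = ∅ := by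
  ext zeta
  simp [Hpos, compPlace, placeComp_of_eq_top hb]

theorem continuous_compPlace (hxi : IsPlaceFun xi) : Continuous (compPlace hxi) := by
  refine continuous_generateFrom_iff.mpr ?_
  rintro _ ⟨b, rfl⟩
  cases hb : xi b with
  | top => simp [preimage_compPlace_Hpos_of_eq_top hxi hb]
  | coe a => simpa [preimage_compPlace_Hpos_of_eq_coe hxi hb] using isOpen_Hpos a

theorem compPlace_injective (hxi : IsPlaceFun xi) (hsurj : ∀ a : K, ∃ x, xi x = a) :
    Function.Injective (compPlace hxi) := by
  intro zeta₁ zeta₂ h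
  refine Subtype.ext (funext fun a => ?_)
  obtain ⟨x, hx⟩ := hsurj a
  simpa [compPlace, placeComp_of_eq_coe hx] using congrArg (fun w : RPlaces L => w.1 x) h

end RPlaces

/-- if `ξ` is a `K`-rational place of `L` (a place of `L` with values in the
subfield `K` which is the identity on `K`), then `ζ ↦ ζ ∘ ξ` is a well-defined, injective
and continuous map `M(K) → M(L)` compatible with restriction. -/
theorem comp_with_rational_place_embeds {L : Type*} [Field L] (K : Subfield L)
    (xi : L → WithTop ↥K) (hxi : IsPlaceFun xi)
    (htriv : ∀ k : ↥K, xi (k : L) = (k : WithTop ↥K)) :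
    ∃ iota : RPlaces ↥K → RPlaces L,
      (∀ zeta : RPlaces ↥K, (iota zeta).1 = placeComp zeta.1 xi) ∧
      Continuous iota ∧ Function.Injective iota ∧
      ∀ (zeta : RPlaces ↥K) (k : ↥K), (iota zeta).1 (k : L) = zeta.1 k :=
  ⟨RPlaces.compPlace hxi, fun _ => rfl, RPlaces.continuous_compPlace hxi,
    RPlaces.compPlace_injective hxi fun k => ⟨k, htriv k⟩,
    fun _ k => placeComp_of_eq_coe (htriv k)⟩
end

section
/- For every pair $(a_1, a_2) \in \R^2$ and every pair $(r_1, r_2)$ of real numbers that are linearly independent over $\Q$, there exists a unique $\R$-place $\xi$ of the rational function field $\R(x_1, x_2)$ whose associated valuation $v$ satisfies $v(x_1 - a_1) = r_1$ and $v(x_2 - a_2) = r_2$; the value group of this valuation is $\Z r_1 + \Z r_2 \subseteq \R$, hence archimedean. Consequently, for fixed $(a_1,a_2)$ there are infinitely many distinct $\R$-places $\xi$ of $\R(x_1,x_2)$ with $\xi(x_1)=a_1$ and $\xi(x_2)=a_2$. -/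
open Set

noncomputable section

/-- The rational function field `ℝ(x₁,x₂)`. -/
abbrev RFF : Type := FractionRing (MvPolynomial (Fin 2) ℝ)

/-- The variable `xᵢ` as an element of `ℝ(x₁,x₂)`. -/
def xvar (i : Fin 2) : RFF := algebraMap (MvPolynomial (Fin 2) ℝ) RFF (MvPolynomial.X i)

/-- A real constant as an element of `ℝ(x₁,x₂)`. -/
def cst (r : ℝ) : RFF := algebraMap (MvPolynomial (Fin 2) ℝ) RFF (MvPolynomial.C r)

/-- The multiplicative value group `ℝ` (with zero adjoined): the additive value `r ∈ ℝ`
corresponds to the multiplicative value `ofAdd (-r)`. -/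
abbrev GammaR : Type := WithZero (Multiplicative ℝ)

/-- An additive real value as an element of the multiplicative value group. -/
def toVal (r : ℝ) : GammaR := ((Multiplicative.ofAdd (-r) : Multiplicative ℝ) : GammaR)

/-- The condition on a valuation `v` of `ℝ(x₁,x₂)` with values in `ℝ`: it extends the
trivial valuation on `ℝ` and satisfies `v(x₁-a₁) = r₁`, `v(x₂-a₂) = r₂` (additively). -/
def ValCond (a1 a2 r1 r2 : ℝ) (v : Valuation RFF GammaR) : Prop :=
  (∀ c : ℝ, c ≠ 0 → v (cst c) = 1) ∧
  v (xvar 0 - cst a1) = toVal r1 ∧ v (xvar 1 - cst a2) = toVal r2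

/-!
Substituting `xᵢ ↦ aᵢ + t ^ rᵢ` embeds `ℝ(x₁,x₂)` into the field of Hahn series `ℝ((t ^ ℝ))`,
and the order of Hahn series pulls back to a valuation with `v(xᵢ - aᵢ) = rᵢ`. Conversely, for
any such valuation the rational independence of `r₁, r₂` gives the monomials in the `xᵢ - aᵢ`
pairwise distinct values, so a polynomial takes the value of its monomial of least weight. This
pins `v` down on polynomials, hence on `ℝ(x₁,x₂)`, and puts its values in `ℤr₁ + ℤr₂`.
Following the embedding by the residue map of Hahn series (constant coefficient on series of
nonnegative order, `∞` otherwise) gives an `ℝ`-place with `ξ(xᵢ) = aᵢ` as soon as `rᵢ > 0`.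
-/

theorem toVal_add (x y : ℝ) : toVal (x + y) = toVal x * toVal y := by
  rw [toVal, toVal, toVal, ← WithZero.coe_mul, ← ofAdd_add, neg_add]

theorem toVal_zero : toVal 0 = 1 := by simp [toVal]

theorem toVal_ne_zero (x : ℝ) : toVal x ≠ 0 := WithZero.coe_ne_zero

theorem toVal_sub (x y : ℝ) : toVal (x - y) = toVal x / toVal y := by
  rw [eq_div_iff (toVal_ne_zero y), ← toVal_add, sub_add_cancel]

theorem toVal_lt_toVal {x y : ℝ} : toVal x < toVal y ↔ y < x := by
  rw [toVal, toVal, WithZero.coe_lt_coe, Multiplicative.ofAdd_lt, neg_lt_neg_iff]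

theorem toVal_le_toVal {x y : ℝ} : toVal x ≤ toVal y ↔ y ≤ x := by
  rw [toVal, toVal, WithZero.coe_le_coe, Multiplicative.ofAdd_le, neg_le_neg_iff]

theorem one_lt_toVal_iff {x : ℝ} : 1 < toVal x ↔ x < 0 := by
  rw [← toVal_zero, toVal_lt_toVal]

theorem toVal_injective : Function.Injective toVal := fun _ _ h =>
  le_antisymm (toVal_le_toVal.mp h.ge) (toVal_le_toVal.mp h.le)

theorem toVal_sum {ι : Type*} (s : Finset ι) (f : ι → ℝ) :
    toVal (∑ i ∈ s, f i) = ∏ i ∈ s, toVal (f i) := by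
  classical
  induction s using Finset.induction_on with
  | empty => exact toVal_zero
  | insert i s hi ih => rw [Finset.sum_insert hi, Finset.prod_insert hi, toVal_add, ih]

theorem toVal_nsmul (n : ℕ) (x : ℝ) : toVal (n • x) = toVal x ^ n := by
  rw [toVal, toVal, ← WithZero.coe_pow, ← ofAdd_nsmul, smul_neg]

theorem Finsupp.weight_injective_of_linearIndependent {σ : Type*} {r : σ → ℝ}
    (hr : LinearIndependent ℤ r) : Function.Injective (Finsupp.weight r : (σ →₀ ℕ) → ℝ) :=
  hr.restrict_scalars' ℕ

open MvPolynomial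

namespace MvPolynomial

variable {σ k : Type*} [CommRing k]

def translate (a : σ → k) : MvPolynomial σ k →ₐ[k] MvPolynomial σ k :=
  aeval fun i => X i + C (a i)

theorem aeval_sub_translate {R : Type*} [CommRing R] [Algebra k R] (y : σ → R) (a : σ → k)
    (p : MvPolynomial σ k) :
    aeval (fun i => y i - algebraMap k R (a i)) (translate a p) = aeval y p := by
  rw [translate, ← AlgHom.comp_apply, comp_aeval]
  congr 2
  ext i
  simp

theorem translate_injective (a : σ → k) : Function.Injective (translate a) :=
  Function.LeftInverse.injective (g := aeval fun i => X i - algebraMap k _ (a i))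
    fun p => (aeval_sub_translate X a p).trans (aeval_X_left_apply p)

end MvPolynomial

section MonomialValues

variable {σ k R : Type*} [Field k] [CommRing R] [Algebra k R]
  {v : Valuation R GammaR} {y : σ → R} {a : σ → k} {r : σ → ℝ}

theorem Valuation.map_aeval_monomial (hv : ∀ c : k, c ≠ 0 → v (algebraMap k R c) = 1)
    (hy : ∀ i, v (y i) = toVal (r i)) (d : σ →₀ ℕ) {c : k} (hc : c ≠ 0) :
    v (aeval y (monomial d c)) = toVal (Finsupp.weight r d) := by
  rw [aeval_monomial, map_mul, hv c hc, one_mul, Finsupp.prod, map_prod, Finsupp.weight_apply,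
    Finsupp.sum, toVal_sum]
  exact Finset.prod_congr rfl fun i _ => by rw [map_pow, hy, toVal_nsmul]

/-- Rational independence makes the monomials of `q` have pairwise distinct values, so the
value of the sum is the largest of them (the one of least weight). -/
theorem Valuation.map_aeval_eq_sup (hv : ∀ c : k, c ≠ 0 → v (algebraMap k R c) = 1)
    (hy : ∀ i, v (y i) = toVal (r i)) (hr : LinearIndependent ℤ r)
    (q : MvPolynomial σ k) :
    v (aeval y q) = q.support.sup fun d => toVal (Finsupp.weight r d) := by
  classical
  rcases q.support.eq_empty_or_nonempty with hq | hq
  · rw [hq, Finset.sup_empty, support_eq_empty.mp hq, map_zero, map_zero]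
    rfl
  obtain ⟨d, hd, hmin⟩ := q.support.exists_min_image (Finsupp.weight r) hq
  have hterm : ∀ e ∈ q.support, v (aeval y (monomial e (q.coeff e))) = toVal (Finsupp.weight r e) :=
    fun e he => v.map_aeval_monomial hv hy e (mem_support_iff.mp he)
  conv_lhs => rw [q.as_sum, map_sum]
  rw [v.map_sum_eq_of_lt hd, hterm d hd]
  · exact le_antisymm (Finset.le_sup (f := fun e => toVal (Finsupp.weight r e)) hd)
      (Finset.sup_le fun e he => toVal_le_toVal.mpr (hmin e he))
  · intro e he
    obtain ⟨he, hne⟩ := Finset.mem_sdiff.mp he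
    rw [hterm e he, hterm d hd, toVal_lt_toVal]
    exact (hmin e he).lt_of_ne fun h =>
      hne (Finset.mem_singleton.mpr (Finsupp.weight_injective_of_linearIndependent hr h).symm)

theorem Valuation.map_aeval_eq_sup_translate (hv : ∀ c : k, c ≠ 0 → v (algebraMap k R c) = 1)
    (hy : ∀ i, v (y i - algebraMap k R (a i)) = toVal (r i)) (hr : LinearIndependent ℤ r)
    (p : MvPolynomial σ k) :
    v (aeval y p) = (translate a p).support.sup fun d => toVal (Finsupp.weight r d) := by
  rw [← aeval_sub_translate y a p, v.map_aeval_eq_sup hv hy hr]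

theorem Valuation.exists_map_aeval_eq_translate
    (hv : ∀ c : k, c ≠ 0 → v (algebraMap k R c) = 1)
    (hy : ∀ i, v (y i - algebraMap k R (a i)) = toVal (r i)) (hr : LinearIndependent ℤ r)
    {p : MvPolynomial σ k} (hp : p ≠ 0) :
    ∃ d : σ →₀ ℕ, v (aeval y p) = toVal (Finsupp.weight r d) := by
  obtain ⟨d, -, hd⟩ := Finset.exists_mem_eq_sup _
    (support_nonempty.mpr ((map_ne_zero_iff _ (translate_injective a)).mpr hp))
    fun d => toVal (Finsupp.weight r d)
  exact ⟨d, (v.map_aeval_eq_sup_translate hv hy hr p).trans hd⟩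

end MonomialValues

theorem Valuation.ext_of_isFractionRing {A K Γ₀ : Type*} [CommRing A] [Field K] [Algebra A K]
    [IsFractionRing A K] [LinearOrderedCommGroupWithZero Γ₀] {v w : Valuation K Γ₀}
    (h : ∀ p : A, v (algebraMap A K p) = w (algebraMap A K p)) : v = w := by
  ext f
  obtain ⟨p, s, -, rfl⟩ := IsFractionRing.div_surjective A f
  rw [map_div₀, map_div₀, h, h]

section MonomialValuation

variable {σ k : Type*} [Field k]

def IsMonomialValuation (a : σ → k) (r : σ → ℝ)
    (v : Valuation (FractionRing (MvPolynomial σ k)) GammaR) : Prop :=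
  (∀ c : k, c ≠ 0 → v (algebraMap k _ c) = 1) ∧
    ∀ i, v (algebraMap _ _ (X i : MvPolynomial σ k) - algebraMap k _ (a i)) = toVal (r i)

theorem MvPolynomial.aeval_algebraMap_X_fractionRing (p : MvPolynomial σ k) :
    aeval (fun i => algebraMap _ (FractionRing (MvPolynomial σ k)) (X i : MvPolynomial σ k)) p
      = algebraMap _ _ p := by
  conv_rhs => rw [← IsScalarTower.coe_toAlgHom' k,
    aeval_unique (IsScalarTower.toAlgHom k (MvPolynomial σ k) (FractionRing (MvPolynomial σ k)))]
  rfl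

namespace IsMonomialValuation

variable {a : σ → k} {r : σ → ℝ} {v : Valuation (FractionRing (MvPolynomial σ k)) GammaR}

theorem map_algebraMap (hv : IsMonomialValuation a r v) (hr : LinearIndependent ℤ r)
    (p : MvPolynomial σ k) :
    v (algebraMap _ _ p) = (translate a p).support.sup fun d => toVal (Finsupp.weight r d) := by
  rw [← aeval_algebraMap_X_fractionRing, v.map_aeval_eq_sup_translate hv.1 hv.2 hr]

theorem exists_map_algebraMap_eq (hv : IsMonomialValuation a r v) (hr : LinearIndependent ℤ r)
    {p : MvPolynomial σ k} (hp : p ≠ 0) :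
    ∃ d : σ →₀ ℕ, v (algebraMap _ _ p) = toVal (Finsupp.weight r d) := by
  rw [← aeval_algebraMap_X_fractionRing]
  exact v.exists_map_aeval_eq_translate hv.1 hv.2 hr hp

theorem unique {w : Valuation (FractionRing (MvPolynomial σ k)) GammaR}
    (hv : IsMonomialValuation a r v) (hw : IsMonomialValuation a r w) (hr : LinearIndependent ℤ r) :
    v = w :=
  Valuation.ext_of_isFractionRing fun p => by rw [hv.map_algebraMap hr, hw.map_algebraMap hr]

theorem exists_eq_toVal_sub (hv : IsMonomialValuation a r v) (hr : LinearIndependent ℤ r)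
    {f : FractionRing (MvPolynomial σ k)} (hf : f ≠ 0) :
    ∃ d e : σ →₀ ℕ, v f = toVal (Finsupp.weight r d - Finsupp.weight r e) := by
  obtain ⟨p, s, hs, rfl⟩ := IsFractionRing.div_surjective (MvPolynomial σ k) f
  have hp : p ≠ 0 := by rintro rfl; simp at hf
  obtain ⟨d, hd⟩ := hv.exists_map_algebraMap_eq hr hp
  obtain ⟨e, he⟩ := hv.exists_map_algebraMap_eq hr (nonZeroDivisors.ne_zero hs)
  exact ⟨d, e, by rw [map_div₀, hd, he, toVal_sub]⟩

end IsMonomialValuation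

end MonomialValuation

namespace HahnSeries

section RealValuation

variable {R : Type*} [Ring R] [IsDomain R]

open scoped Classical in
def realValuation : Valuation (HahnSeries ℝ R) GammaR where
  toFun x := if x = 0 then 0 else toVal x.order
  map_zero' := if_pos rfl
  map_one' := by simp [toVal_zero]
  map_mul' x y := by
    by_cases hx : x = 0
    · simp [hx]
    by_cases hy : y = 0
    · simp [hy]
    simp [hx, hy, order_mul hx hy, toVal_add]
  map_add_le_max' x y := by
    by_cases hx : x = 0
    · simp [hx]
    by_cases hy : y = 0
    · simp [hy]
    by_cases hxy : x + y = 0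
    · simp [hxy]
    simp only [hx, hy, hxy, if_false]
    rcases min_cases x.order y.order with ⟨h, -⟩ | ⟨h, -⟩
    · exact le_max_of_le_left (toVal_le_toVal.mpr (h ▸ min_order_le_order_add hxy))
    · exact le_max_of_le_right (toVal_le_toVal.mpr (h ▸ min_order_le_order_add hxy))

theorem realValuation_of_ne_zero {x : HahnSeries ℝ R} (hx : x ≠ 0) :
    realValuation x = toVal x.order :=
  if_neg hx

theorem realValuation_single (u : ℝ) {c : R} (hc : c ≠ 0) :
    realValuation (single u c) = toVal u := by
  rw [realValuation_of_ne_zero (single_ne_zero hc), order_single hc]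

theorem realValuation_C {c : R} (hc : c ≠ 0) : realValuation (C c) = 1 := by
  rw [C_apply, realValuation_single 0 hc, toVal_zero]

theorem coeff_zero_eq_zero_of_realValuation_lt_one {x : HahnSeries ℝ R}
    (hx : realValuation x < 1) : x.coeff 0 = 0 := by
  rcases eq_or_ne x 0 with rfl | hx0
  · rfl
  rw [realValuation_of_ne_zero hx0, ← toVal_zero, toVal_lt_toVal] at hx
  exact coeff_eq_zero_of_lt_order hx

theorem coeff_zero_mul_of_realValuation_le_one {x y : HahnSeries ℝ R}
    (hx : realValuation x ≤ 1) (hy : realValuation y ≤ 1) :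
    (x * y).coeff 0 = x.coeff 0 * y.coeff 0 := by
  have hxy := map_mul realValuation x y
  rcases hx.lt_or_eq with hx_lt | hx_eq
  · rw [coeff_zero_eq_zero_of_realValuation_lt_one hx_lt, zero_mul,
      coeff_zero_eq_zero_of_realValuation_lt_one (hxy.trans_lt (mul_lt_one_of_lt_of_le hx_lt hy))]
  rcases hy.lt_or_eq with hy_lt | hy_eq
  · rw [coeff_zero_eq_zero_of_realValuation_lt_one hy_lt, mul_zero,
      coeff_zero_eq_zero_of_realValuation_lt_one
        ((hxy.trans (mul_comm _ _)).trans_lt (mul_lt_one_of_lt_of_le hy_lt hx))]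
  have order_eq_zero : ∀ z : HahnSeries ℝ R, realValuation z = 1 → z.order = 0 := fun z hz => by
    have hz0 : z ≠ 0 := by rintro rfl; simp at hz
    exact toVal_injective ((realValuation_of_ne_zero hz0).symm.trans (hz.trans toVal_zero.symm))
  have h := coeff_mul_order_add_order x y
  rwa [leadingCoeff_eq, leadingCoeff_eq, order_eq_zero x hx_eq, order_eq_zero y hy_eq,
    add_zero] at h

end RealValuation

end HahnSeries

/-- The `Algebra k (HahnSeries ℝ k)` instance found by `algebraMap` goes through power series,
so this is not `rfl`. -/
theorem HahnSeries.algebraMap_eq_C {k : Type*} [CommRing k] (c : k) :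
    algebraMap k (HahnSeries ℝ k) c = HahnSeries.C c := by
  simp [HahnSeries.algebraMap_apply']

section HahnEmbedding

variable {σ k : Type*} [Field k] (a : σ → k) (r : σ → ℝ)

theorem HahnSeries.realValuation_algebraMap {c : k} (hc : c ≠ 0) :
    realValuation (algebraMap k (HahnSeries ℝ k) c) = 1 := by
  rw [algebraMap_eq_C, realValuation_C hc]

def hahnPoint (i : σ) : HahnSeries ℝ k := HahnSeries.C (a i) + HahnSeries.single (r i) 1

theorem realValuation_hahnPoint_sub (i : σ) :
    HahnSeries.realValuation (hahnPoint a r i - algebraMap k _ (a i)) = toVal (r i) := by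
  rw [hahnPoint, HahnSeries.algebraMap_eq_C, add_sub_cancel_left,
    HahnSeries.realValuation_single _ one_ne_zero]

theorem aeval_hahnPoint_injective (hr : LinearIndependent ℤ r) :
    Function.Injective (aeval (R := k) (hahnPoint a r)) := by
  refine (injective_iff_map_eq_zero _).mpr fun p hp => by_contra fun hp0 => ?_
  obtain ⟨d, hd⟩ := (HahnSeries.realValuation (R := k)).exists_map_aeval_eq_translate
    (fun c => HahnSeries.realValuation_algebraMap) (realValuation_hahnPoint_sub a r) hr hp0
  exact toVal_ne_zero _ (hd.symm.trans ((congrArg _ hp).trans (map_zero _)))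

def hahnEmbedding (hr : LinearIndependent ℤ r) :
    FractionRing (MvPolynomial σ k) →+* HahnSeries ℝ k :=
  IsFractionRing.lift (A := MvPolynomial σ k) (g := (aeval (R := k) (hahnPoint a r)).toRingHom)
    (aeval_hahnPoint_injective a r hr)

theorem hahnEmbedding_algebraMap (hr : LinearIndependent ℤ r) (p : MvPolynomial σ k) :
    hahnEmbedding a r hr (algebraMap _ _ p) = aeval (hahnPoint a r) p :=
  IsFractionRing.lift_algebraMap _ _

def monomialValuation (hr : LinearIndependent ℤ r) :
    Valuation (FractionRing (MvPolynomial σ k)) GammaR :=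
  HahnSeries.realValuation.comap (hahnEmbedding a r hr)

theorem isMonomialValuation_monomialValuation (hr : LinearIndependent ℤ r) :
    IsMonomialValuation a r (monomialValuation a r hr) := by
  refine ⟨fun c hc => ?_, fun i => ?_⟩ <;> rw [monomialValuation, Valuation.comap_apply,
    IsScalarTower.algebraMap_apply k (MvPolynomial σ k)]
  · rw [hahnEmbedding_algebraMap, AlgHom.commutes, HahnSeries.realValuation_algebraMap hc]
  · rw [← map_sub, hahnEmbedding_algebraMap, map_sub, aeval_X, AlgHom.commutes,
      realValuation_hahnPoint_sub]

end HahnEmbedding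

theorem IsPlaceFun.comp_ringHom {L L' K : Type*} [Field L] [Field L'] [Field K]
    {f : L → WithTop K} (hf : IsPlaceFun f) (e : L' →+* L) : IsPlaceFun (f ∘ e) := by
  obtain ⟨h1, hadd, hmul, htop⟩ := hf
  refine ⟨by simp [h1], fun x y hx hy => ?_, fun x y hx hy => ?_, fun x hx => ?_⟩
  · simpa using hadd _ _ hx hy
  · simpa using hmul _ _ hx hy
  · obtain ⟨hx0, hinv⟩ := htop _ hx
    exact ⟨fun h => hx0 (by simp [h]), by simpa using hinv⟩

namespace Valuation

variable {L k Γ₀ : Type*} [Field L] [LinearOrderedCommGroupWithZero Γ₀]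
  (v : Valuation L Γ₀) (ρ : L → k)

open scoped Classical in
def place : L → WithTop k := fun x => if v x ≤ 1 then (ρ x : WithTop k) else ⊤

variable {v ρ}

theorem place_of_le_one {x : L} (hx : v x ≤ 1) : v.place ρ x = ρ x := if_pos hx

theorem place_eq_top_iff {x : L} : v.place ρ x = ⊤ ↔ 1 < v x := by
  by_cases hx : v x ≤ 1 <;> simp [place, hx, not_le.mp]

theorem isPlaceFun_place [Field k] (h1 : ρ 1 = 1)
    (hadd : ∀ x y, v x ≤ 1 → v y ≤ 1 → ρ (x + y) = ρ x + ρ y)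
    (hmul : ∀ x y, v x ≤ 1 → v y ≤ 1 → ρ (x * y) = ρ x * ρ y)
    (hmax : ∀ x, v x < 1 → ρ x = 0) : IsPlaceFun (v.place ρ) := by
  classical
  have le_one_of_ne_top : ∀ {x}, v.place ρ x ≠ ⊤ → v x ≤ 1 := fun hx =>
    not_lt.mp (mt place_eq_top_iff.mpr hx)
  refine ⟨by rw [place_of_le_one v.map_one.le, h1, WithTop.coe_one], fun x y hx hy => ?_,
    fun x y hx hy => ?_, fun x hx => ?_⟩
  · replace hx := le_one_of_ne_top hx
    replace hy := le_one_of_ne_top hy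
    rw [place_of_le_one (v.map_add_le_max' x y |>.trans (max_le hx hy)), place_of_le_one hx,
      place_of_le_one hy, hadd x y hx hy, WithTop.coe_add]
  · replace hx := le_one_of_ne_top hx
    replace hy := le_one_of_ne_top hy
    rw [place_of_le_one ((v.map_mul x y).trans_le (mul_le_one' hx hy)), place_of_le_one hx,
      place_of_le_one hy, hmul x y hx hy, WithTop.coe_mul]
  · have hx1 := place_eq_top_iff.mp hx
    have hx0 : x ≠ 0 := by rintro rfl; simp at hx1
    have hinv : v x⁻¹ < 1 := by rw [map_inv₀]; exact inv_lt_one_of_one_lt₀ hx1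
    exact ⟨hx0, by rw [place_of_le_one hinv.le, hmax _ hinv, WithTop.coe_zero]⟩

end Valuation

theorem HahnSeries.isPlaceFun_place_coeff_zero {k : Type*} [Field k] :
    IsPlaceFun (realValuation.place fun x : HahnSeries ℝ k => x.coeff 0) :=
  Valuation.isPlaceFun_place (by simp) (fun x y _ _ => coeff_add ..)
    (fun _ _ => coeff_zero_mul_of_realValuation_le_one)
    (fun _ => coeff_zero_eq_zero_of_realValuation_lt_one)

section MonomialPlace

variable {σ k : Type*} [Field k] (a : σ → k) (r : σ → ℝ) (hr : LinearIndependent ℤ r)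

def monomialPlace : FractionRing (MvPolynomial σ k) → WithTop k :=
  HahnSeries.realValuation.place (fun x : HahnSeries ℝ k => x.coeff 0) ∘ hahnEmbedding a r hr

theorem isPlaceFun_monomialPlace : IsPlaceFun (monomialPlace a r hr) :=
  HahnSeries.isPlaceFun_place_coeff_zero.comp_ringHom _

theorem monomialPlace_algebraMap_X {i : σ} (hi : 0 < r i) :
    monomialPlace a r hr (algebraMap (MvPolynomial σ k) _ (X i)) = a i := by
  have h_single : HahnSeries.realValuation (HahnSeries.single (r i) (1 : k)) ≤ 1 := by
    rw [HahnSeries.realValuation_single _ one_ne_zero, ← toVal_zero, toVal_le_toVal]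
    exact hi.le
  have h_C : HahnSeries.realValuation (HahnSeries.C (a i)) ≤ 1 := by
    rcases eq_or_ne (a i) 0 with h | h
    · simp [h]
    · exact (HahnSeries.realValuation_C h).le
  rw [monomialPlace, Function.comp_apply, hahnEmbedding_algebraMap, aeval_X, hahnPoint,
    Valuation.place_of_le_one ((Valuation.map_add _ _ _).trans (max_le h_C h_single)),
    HahnSeries.coeff_add, HahnSeries.C_apply, HahnSeries.coeff_single_same,
    HahnSeries.coeff_single_of_ne hi.ne, add_zero]

theorem monomialPlace_div_pow_eq_top_iff (i j : σ) (n : ℕ) :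
    monomialPlace a r hr ((algebraMap (MvPolynomial σ k) _ (X j) - algebraMap k _ (a j)) /
      (algebraMap (MvPolynomial σ k) _ (X i) - algebraMap k _ (a i)) ^ n) = ⊤ ↔ r j < n • r i := by
  have hv := isMonomialValuation_monomialValuation a r hr
  rw [monomialPlace, Function.comp_apply, Valuation.place_eq_top_iff, ← Valuation.comap_apply,
    ← monomialValuation, map_div₀, map_pow, hv.2, hv.2, ← toVal_nsmul, ← toVal_sub,
    one_lt_toVal_iff, sub_neg]

end MonomialPlace

theorem Irrational.linearIndependent_one {x : ℝ} (hx : Irrational x) :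
    LinearIndependent ℤ ![1, x] := by
  refine LinearIndependent.pair_iff.mpr fun s t h => ?_
  rw [zsmul_eq_mul, zsmul_eq_mul, mul_one] at h
  have ht : t = 0 := by
    by_contra ht
    refine (irrational_iff_ne_rational x).mp hx (-s) t ht ?_
    field_simp
    push_cast
    linarith
  subst ht
  exact ⟨by simpa using h, rfl⟩

/-- The weights `(1, n + √2)` give pairwise distinct places: `(x₂ - a₂) / (x₁ - a₁) ^ (n + 1)`
is finite at the `n`-th one and infinite at all earlier ones. -/
theorem infinite_setOf_isPlaceFun_algebraMap_X_eq {k : Type*} [Field k] (a : Fin 2 → k) :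
    {ξ : FractionRing (MvPolynomial (Fin 2) k) → WithTop k |
      IsPlaceFun ξ ∧ ∀ i, ξ (algebraMap (MvPolynomial (Fin 2) k) _ (X i)) = a i}.Infinite := by
  set r : ℕ → Fin 2 → ℝ := fun n => ![1, n + √2]
  have hr n : LinearIndependent ℤ (r n) :=
    (irrational_sqrt_two.natCast_add n).linearIndependent_one
  have hpos n i : 0 < r n i := by
    fin_cases i
    · simp [r]
    · simp only [r, Fin.mk_one, Matrix.cons_val_one, Matrix.cons_val_fin_one]
      positivity
  have top_iff m n : monomialPlace a (r m) (hr m)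
      ((algebraMap (MvPolynomial (Fin 2) k) _ (X 1) - algebraMap k _ (a 1)) /
        (algebraMap (MvPolynomial (Fin 2) k) _ (X 0) - algebraMap k _ (a 0)) ^ (n + 1)) = ⊤ ↔
      m < n := by
    have h1 : 1 < √2 := by rw [Real.lt_sqrt zero_le_one]; norm_num
    have h2 : √2 < 2 := by rw [Real.sqrt_lt' two_pos]; norm_num
    rw [monomialPlace_div_pow_eq_top_iff]
    simp only [r, Matrix.cons_val_one, Matrix.cons_val_fin_one, Matrix.cons_val_zero,
      nsmul_eq_mul, mul_one, Nat.cast_add, Nat.cast_one]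
    constructor
    · intro h
      by_contra hmn
      have : (n : ℝ) ≤ m := by exact_mod_cast not_lt.mp hmn
      linarith
    · intro h
      have : (m : ℝ) + 1 ≤ n := by exact_mod_cast h
      linarith
  refine Set.infinite_of_injective_forall_mem (f := fun n => monomialPlace a (r n) (hr n))
    (Function.Injective.of_lt_imp_ne fun m n hmn h => lt_irrefl n ?_)
    fun n => ⟨isPlaceFun_monomialPlace _ _ _, fun i => monomialPlace_algebraMap_X _ _ _ (hpos n i)⟩
  exact (top_iff n n).mp (congrFun h _ ▸ (top_iff m n).mpr hmn)

theorem cst_eq_algebraMap (c : ℝ) : cst c = algebraMap ℝ RFF c := by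
  rw [cst, ← MvPolynomial.algebraMap_eq, ← IsScalarTower.algebraMap_apply]

theorem valCond_iff {a1 a2 r1 r2 : ℝ} {v : Valuation RFF GammaR} :
    ValCond a1 a2 r1 r2 v ↔ IsMonomialValuation ![a1, a2] ![r1, r2] v := by
  simp [ValCond, IsMonomialValuation, Fin.forall_fin_two, cst_eq_algebraMap, xvar]

/-- for rationally independent `r₁, r₂ ∈ ℝ` there is a unique valuation of
`ℝ(x₁,x₂)` with real values, trivial on `ℝ`, with `v(xᵢ-aᵢ) = rᵢ`; its value group is
`ℤr₁ + ℤr₂ ⊆ ℝ` (hence archimedean); consequently there are infinitely many `ℝ`-places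
`ξ` of `ℝ(x₁,x₂)` with `ξ(x₁) = a₁` and `ξ(x₂) = a₂`. -/
theorem monomial_valuations (a1 a2 r1 r2 : ℝ)
    (hind : ∀ m n : ℤ, (m : ℝ) * r1 + (n : ℝ) * r2 = 0 → m = 0 ∧ n = 0) :
    (∃! v : Valuation RFF GammaR, ValCond a1 a2 r1 r2 v) ∧
    (∀ v : Valuation RFF GammaR, ValCond a1 a2 r1 r2 v →
      ∀ f : RFF, f ≠ 0 → ∃ m n : ℤ, v f = toVal ((m : ℝ) * r1 + (n : ℝ) * r2)) ∧
    {xi : RFF → WithTop ℝ | IsPlaceFun xi ∧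
      xi (xvar 0) = ((a1 : ℝ) : WithTop ℝ) ∧ xi (xvar 1) = ((a2 : ℝ) : WithTop ℝ)}.Infinite := by
  have hr : LinearIndependent ℤ ![r1, r2] :=
    LinearIndependent.pair_iff.mpr fun s t h => hind s t (by simpa [zsmul_eq_mul] using h)
  have hv := isMonomialValuation_monomialValuation ![a1, a2] ![r1, r2] hr
  refine ⟨⟨_, valCond_iff.mpr hv, fun w hw => (valCond_iff.mp hw).unique hv hr⟩,
    fun v hv f hf => ?_, ?_⟩
  · obtain ⟨d, e, h⟩ := (valCond_iff.mp hv).exists_eq_toVal_sub hr hf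
    refine ⟨d 0 - e 0, d 1 - e 1, h.trans (congrArg toVal ?_)⟩
    simp only [Finsupp.weight_eq_sum, Fin.sum_univ_two, nsmul_eq_mul]
    push_cast
    ring
  · simpa [Fin.forall_fin_two, xvar] using infinite_setOf_isPlaceFun_algebraMap_X_eq ![a1, a2]

end
end

section
/- Let $R$ be a real closed field and let $C_1, C_2$ be cuts in $R$. Suppose the orderings $\chi(C_1), \chi(C_2)$ of $R(y)$ (where $\chi(C)$ for $C=(D,E)$ is the unique ordering in which $y - d > 0$ for $d \in D$ and $y - e < 0$ for $e \in E$) induce $\R$-places $\lambda(\chi(C_1)), \lambda(\chi(C_2))$. Then $\lambda(\chi(C_1)) = \lambda(\chi(C_2))$ with $C_1 \ne C_2$ implies that $\{C_1, C_2\} = \{B^-, B^+\}$ for a uniquely determined ball $B$ in $R$; in particular, for every $\zeta \in M(R(y))$ the fiber $\lambda^{-1}(\zeta)$ contains at most two orderings. -/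
open Set

section Cuts
variable {α : Type*} [LinearOrder α]

/-- Cuts `(D, E)` in a linear order `α` are identified with their left parts `D`,
which are exactly the lower sets of `α` (with `E = α \ D`); they are ordered by
inclusion of left parts.  This order is linear. -/
instance : IsTotal (LowerSet α) (· ≤ ·) := by
  constructor
  intro s t
  by_cases h : (s : Set α) ⊆ (t : Set α)
  · exact Or.inl h
  · refine Or.inr fun x hx => ?_
    obtain ⟨a, ha, hat⟩ := not_subset.mp h
    by_cases hxa : x ≤ a
    · exact s.lower hxa ha
    · exact absurd (t.lower (le_of_not_ge hxa) hx) hat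

noncomputable instance : LinearOrder (LowerSet α) :=
  letI := Classical.decEq (LowerSet α)
  letI : DecidableRel ((· ≤ ·) : LowerSet α → LowerSet α → Prop) :=
    fun _ _ => Classical.propDecidable _
  letI : DecidableRel ((· < ·) : LowerSet α → LowerSet α → Prop) :=
    fun _ _ => Classical.propDecidable _
  Lattice.toLinearOrder _

/-- The interval (order) topology on the set of cuts. -/
instance : TopologicalSpace (LowerSet α) := Preorder.topology _
instance : OrderTopology (LowerSet α) := ⟨rfl⟩

/-- The principal cut `a⁺`, with left part `{x | x ≤ a}`. -/
def upCut (a : α) : LowerSet α := ⟨{x | x ≤ a}, fun _ _ hba ha => le_trans hba ha⟩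

/-- The principal cut `a⁻`, with left part `{x | x < a}`. -/
def lowCut (a : α) : LowerSet α := ⟨{x | x < a}, fun _ _ hba ha => lt_of_le_of_lt hba ha⟩

/-- The upper edge `A⁺` of a set `A`: the cut whose left part is the smallest
initial segment containing `A`. -/
def upperEdge (A : Set α) : LowerSet α :=
  ⟨{x | ∃ a ∈ A, x ≤ a}, fun _ _ hba ⟨c, hc, hac⟩ => ⟨c, hc, hba.trans hac⟩⟩

/-- The lower edge `A⁻` of a set `A`: the cut whose right part is the smallest
final segment containing `A` (given here by its left part). -/
def lowerEdge (A : Set α) : LowerSet α :=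
  ⟨{x | ∀ a ∈ A, x < a}, fun _ _ hba ha c hc => lt_of_le_of_lt hba (ha c hc)⟩

end Cuts

open scoped Classical

/-- A (strict) ordering of the field `L`, given by its positive cone `P`. -/
def IsOrdering {L : Type*} [Field L] (P : Set L) : Prop :=
  (∀ x ∈ P, ∀ y ∈ P, x + y ∈ P) ∧ (∀ x ∈ P, ∀ y ∈ P, x * y ∈ P) ∧
  (0 : L) ∉ P ∧ ∀ x : L, x ≠ 0 → (x ∈ P ↔ -x ∉ P)

/-- The `ℝ`-place `λ(P)` associated with the ordering `P` of `L`: an element bounded by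
natural numbers on both sides is sent to the supremum of the rationals below it (its
standard part), and unbounded elements are sent to `∞`. -/
noncomputable def assocPlace {L : Type*} [Field L] (P : Set L) : L → WithTop ℝ :=
  fun x =>
    if (∃ n : ℕ, ((n : L) - x) ∈ P ∧ (x + (n : L)) ∈ P) then
      ((sSup {r : ℝ | ∃ q : ℚ, r = (q : ℝ) ∧ x - (q : L) ∈ P} : ℝ) : WithTop ℝ)
    else ⊤


/-!
If `χ(C₁)` and `χ(C₂)` with `C₁ < C₂` induce the same `ℝ`-place, the gap `C₂ \ C₁` is closed
under the point reflections `a ↦ 2b - a`: otherwise `(y - a) / (b - a)` would have standard part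
in `[1, 2]` at one ordering and `≤ 0` at the other. A nonempty convex set closed under
reflections is a ball, and `C₁`, `C₂` are its edges. Of three cuts `A < B < C` with the same
place, both `B \ A` and `C \ A` would be reflection-closed; but reflecting a point `b ∈ C \ B`
through a point `a ∈ B \ A` lands in `B \ A`, and reflecting back through `a` gives `b ∉ B`.
-/

namespace IsOrdering

variable {L : Type*} [Field L] {P : Set L}

theorem add_mem (hP : IsOrdering P) {x y : L} (hx : x ∈ P) (hy : y ∈ P) : x + y ∈ P :=
  hP.1 x hx y hy

theorem mul_mem (hP : IsOrdering P) {x y : L} (hx : x ∈ P) (hy : y ∈ P) : x * y ∈ P :=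
  hP.2.1 x hx y hy

theorem ne_zero_of_mem (hP : IsOrdering P) {x : L} (hx : x ∈ P) : x ≠ 0 :=
  fun h => hP.2.2.1 (h ▸ hx)

theorem neg_not_mem (hP : IsOrdering P) {x : L} (hx : x ∈ P) : -x ∉ P :=
  (hP.2.2.2 x (hP.ne_zero_of_mem hx)).mp hx

theorem neg_mem_of_not_mem (hP : IsOrdering P) {x : L} (hx : x ≠ 0) (h : x ∉ P) : -x ∈ P :=
  not_not.mp fun hn => h ((hP.2.2.2 x hx).mpr hn)

theorem mul_self_mem (hP : IsOrdering P) {x : L} (hx : x ≠ 0) : x * x ∈ P := by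
  by_cases h : x ∈ P
  · exact hP.mul_mem h h
  · simpa using hP.mul_mem (hP.neg_mem_of_not_mem hx h) (hP.neg_mem_of_not_mem hx h)

theorem inv_mem (hP : IsOrdering P) {x : L} (hx : x ∈ P) : x⁻¹ ∈ P := by
  have hx0 := hP.ne_zero_of_mem hx
  rw [show x⁻¹ = x * (x⁻¹ * x⁻¹) by field_simp]
  exact hP.mul_mem hx (hP.mul_self_mem (inv_ne_zero hx0))

theorem one_mem (hP : IsOrdering P) : (1 : L) ∈ P := by
  simpa using hP.mul_self_mem (one_ne_zero (α := L))

theorem natCast_mem (hP : IsOrdering P) {n : ℕ} (hn : n ≠ 0) : (n : L) ∈ P := by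
  induction n with
  | zero => exact absurd rfl hn
  | succ k ih =>
    rcases eq_or_ne k 0 with rfl | hk
    · simpa using hP.one_mem
    · simpa using hP.add_mem (ih hk) hP.one_mem

theorem charZero (hP : IsOrdering P) : CharZero L :=
  charZero_of_inj_zero fun _ hn => by_contra fun h => hP.ne_zero_of_mem (hP.natCast_mem h) hn

theorem ratCast_mem (hP : IsOrdering P) {q : ℚ} (hq : 0 < q) : (q : L) ∈ P := by
  obtain ⟨n, hn⟩ := Int.eq_ofNat_of_zero_le (Rat.num_pos.mpr hq).le
  have hn0 : n ≠ 0 := by rintro rfl; simp [(Rat.num_pos.mpr hq).ne'] at hn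
  rw [Rat.cast_def, hn, Int.cast_natCast, div_eq_mul_inv]
  exact hP.mul_mem (hP.natCast_mem hn0) (hP.inv_mem (hP.natCast_mem q.den_ne_zero))

theorem ratCast_mem_iff (hP : IsOrdering P) {q : ℚ} : (q : L) ∈ P ↔ 0 < q := by
  refine ⟨fun hq => ?_, hP.ratCast_mem⟩
  by_contra! hq0
  rcases hq0.lt_or_eq with hneg | rfl
  · exact hP.neg_not_mem hq (by simpa using hP.ratCast_mem (neg_pos.mpr hneg))
  · exact hP.2.2.1 (by simpa using hq)


theorem ratCast_lt_of_sub_mem (hP : IsOrdering P) {f : L} {q r : ℚ}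
    (hq : f - q ∈ P) (hr : r - f ∈ P) : q < r := by
  have := hP.charZero
  have h := hP.add_mem hq hr
  rw [show f - q + (r - f) = ((r - q : ℚ) : L) by push_cast; ring, hP.ratCast_mem_iff] at h
  linarith

end IsOrdering

section Place

variable {L : Type*} [Field L] {P Q : Set L}

theorem le_assocPlace (hP : IsOrdering P) {f : L} {q : ℚ} (hq : f - q ∈ P) :
    ((q : ℝ) : WithTop ℝ) ≤ assocPlace P f := by
  unfold assocPlace
  split_ifs with hbdd
  · obtain ⟨n, hn, -⟩ := hbdd
    refine WithTop.coe_le_coe.mpr (le_csSup ⟨n, ?_⟩ ⟨q, rfl, hq⟩)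
    rintro _ ⟨r, rfl, hr⟩
    exact_mod_cast (hP.ratCast_lt_of_sub_mem hr (q := r) (r := n) (by simpa using hn)).le
  · exact le_top

theorem assocPlace_le (hP : IsOrdering P) {f : L} {q : ℚ} (hq : q - f ∈ P)
    (hfin : assocPlace P f ≠ ⊤) : assocPlace P f ≤ ((q : ℝ) : WithTop ℝ) := by
  unfold assocPlace at hfin ⊢
  split_ifs at hfin ⊢ with hbdd
  · obtain ⟨n, -, hn⟩ := hbdd
    refine WithTop.coe_le_coe.mpr (csSup_le ⟨_, -n, rfl, by simpa using hn⟩ ?_)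
    rintro _ ⟨r, rfl, hr⟩
    exact_mod_cast (hP.ratCast_lt_of_sub_mem hr hq).le
  · exact absurd rfl hfin

theorem assocPlace_ne_top (hP : IsOrdering P) {f : L} {q r : ℚ} (hq : f - q ∈ P)
    (hr : r - f ∈ P) : assocPlace P f ≠ ⊤ := by
  have := hP.charZero
  obtain ⟨n, hn⟩ := exists_nat_gt (max r (-q))
  have hbdd : ∃ n : ℕ, ((n : L) - f) ∈ P ∧ (f + (n : L)) ∈ P := by
    refine ⟨n, ?_, ?_⟩
    · have h := hP.add_mem hr (hP.ratCast_mem (q := n - r) (by linarith [le_max_left r (-q)]))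
      rwa [show r - f + ((n - r : ℚ) : L) = n - f by push_cast; ring] at h
    · have h := hP.add_mem hq (hP.ratCast_mem (q := q + n) (by linarith [le_max_right r (-q)]))
      rwa [show f - q + ((q + n : ℚ) : L) = f + n by push_cast; ring] at h
  simp [assocPlace, hbdd]

theorem assocPlace_ne_of_mem (hP : IsOrdering P) (hQ : IsOrdering Q) {f : L} {a b c : ℚ}
    (ha : f - a ∈ Q) (hb : b - f ∈ Q) (hc : c - f ∈ P) (hca : c < a) :
    assocPlace P f ≠ assocPlace Q f := by
  intro h
  have hPc := assocPlace_le hP hc (h ▸ assocPlace_ne_top hQ ha hb)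
  have hle : ((a : ℝ) : WithTop ℝ) ≤ ((c : ℝ) : WithTop ℝ) := (le_assocPlace hQ ha).trans (h ▸ hPc)
  exact absurd (by exact_mod_cast hle) hca.not_ge

theorem assocPlace_ne_of_reflection (hP : IsOrdering P) (hQ : IsOrdering Q) {x a b : L}
    (hP_ba : b - a ∈ P) (hQ_ba : b - a ∈ Q) (hxb : x - b ∈ Q) (hbx : 2 * b - a - x ∈ Q)
    (hax : a - x ∈ P) : assocPlace P ≠ assocPlace Q := by
  intro h
  have := hP.charZero
  have hba0 := hP.ne_zero_of_mem hP_ba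
  refine assocPlace_ne_of_mem hP hQ (f := (x - a) / (b - a)) (a := 1) (b := 2) (c := 0)
    ?_ ?_ ?_ one_pos (congrFun h _)
  · rw [show (x - a) / (b - a) - ((1 : ℚ) : L) = (x - b) * (b - a)⁻¹ by field_simp; ring]
    exact hQ.mul_mem hxb (hQ.inv_mem hQ_ba)
  · rw [show ((2 : ℚ) : L) - (x - a) / (b - a) = (2 * b - a - x) * (b - a)⁻¹ by
      field_simp; push_cast; ring]
    exact hQ.mul_mem hbx (hQ.inv_mem hQ_ba)
  · rw [show ((0 : ℚ) : L) - (x - a) / (b - a) = (a - x) * (b - a)⁻¹ by field_simp; ring]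
    exact hP.mul_mem hax (hP.inv_mem hP_ba)

end Place

def IsReflectionClosed {F : Type*} [Ring F] (B : Set F) : Prop :=
  ∀ a ∈ B, ∀ b ∈ B, 2 * b - a ∈ B

section OrderedField

variable {F : Type*} [Field F] [LinearOrder F]

theorem IsBall.nonempty {B : Set F} (hB : IsBall B) : B.Nonempty := by
  obtain ⟨a, S, hS, rfl⟩ := hB
  exact ⟨a, by simpa [vball] using hS.1⟩

variable [IsStrictOrderedRing F]

theorem IsReflectionClosed.add_natCast_mul_sub_mem {B : Set F} (hB : IsReflectionClosed B)
    {a b : F} (ha : a ∈ B) (hb : b ∈ B) (n : ℕ) : a + n * (b - a) ∈ B := by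
  suffices h : a + n * (b - a) ∈ B ∧ a + (n + 1) * (b - a) ∈ B from h.1
  induction n with
  | zero => simpa using ⟨ha, hb⟩
  | succ k ih =>
    refine ⟨by simpa using ih.2, ?_⟩
    have h := hB _ ih.1 _ ih.2
    rwa [show 2 * (a + (k + 1) * (b - a)) - (a + k * (b - a)) = a + ((k + 1 : ℕ) + 1) * (b - a) by
      push_cast; ring] at h

/-- `B` is symmetric about any `a ∈ B`, hence the ball about `a` with radius set `a - B`; this set
contains all integer multiples of its elements, so by convexity it is closed under raising the
valuation. -/
theorem isBall_of_isReflectionClosed {B : Set F} (hne : B.Nonempty) (hB : IsReflectionClosed B)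
    (hconv : B.OrdConnected) : IsBall B := by
  obtain ⟨a, ha⟩ := hne
  refine ⟨a, {u | a - u ∈ B}, ⟨by simpa using ha, fun u hu w ⟨n, hw⟩ => ?_⟩, ?_⟩
  · have hlo : a - n * u ∈ B := by
      convert hB.add_natCast_mul_sub_mem ha hu n using 1; ring
    have hhi : a + n * u ∈ B := by
      convert hB.add_natCast_mul_sub_mem ha (hB _ hu _ ha) n using 1; ring
    refine hconv.uIcc_subset hlo hhi (Set.mem_uIcc.mpr ?_)
    have hw := abs_le.mp hw
    rcases abs_cases u with ⟨hu, _⟩ | ⟨hu, _⟩ <;> rw [hu] at hw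
    · left; constructor <;> linarith
    · right; constructor <;> linarith
  · ext x
    simp [vball]

theorem IsBall.ordConnected {B : Set F} (hB : IsBall B) : B.OrdConnected := by
  obtain ⟨a, S, hS, rfl⟩ := hB
  refine ⟨fun x hx z hz y ⟨hxy, hyz⟩ => ?_⟩
  have hy := abs_le_max_abs_abs (sub_le_sub_left hyz a) (sub_le_sub_left hxy a)
  rcases le_total |a - z| |a - x| with h | h
  · exact hS.2 _ hx _ ⟨1, by simpa [max_eq_right h] using hy⟩
  · exact hS.2 _ hz _ ⟨1, by simpa [max_eq_left h] using hy⟩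

end OrderedField

section Edges

variable {α : Type*} [LinearOrder α]

theorem LowerSet.exists_mem_not_mem_of_lt {C C' : LowerSet α} (h : C < C') :
    ∃ x ∈ C', x ∉ C :=
  Set.not_subset.mp fun hsub => h.not_ge (LowerSet.coe_subset_coe.mp hsub)

@[simp] theorem mem_lowerEdge {A : Set α} {x : α} : x ∈ lowerEdge A ↔ ∀ a ∈ A, x < a := Iff.rfl

@[simp] theorem mem_upperEdge {A : Set α} {x : α} : x ∈ upperEdge A ↔ ∃ a ∈ A, x ≤ a := Iff.rfl

theorem lowerEdge_sdiff {C C' : LowerSet α} (h : C < C') : lowerEdge ((C' : Set α) \ C) = C := by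
  obtain ⟨b, hbC', hbC⟩ := LowerSet.exists_mem_not_mem_of_lt h
  ext x
  refine ⟨fun hx => ?_, fun hx c hc => lt_of_not_ge fun hcx => hc.2 (C.lower hcx hx)⟩
  by_contra hxC
  exact lt_irrefl x (hx x ⟨C'.lower (hx b ⟨hbC', hbC⟩).le hbC', hxC⟩)

theorem upperEdge_sdiff {C C' : LowerSet α} (h : C < C') : upperEdge ((C' : Set α) \ C) = C' := by
  obtain ⟨b, hbC', hbC⟩ := LowerSet.exists_mem_not_mem_of_lt h
  ext x
  refine ⟨fun ⟨c, hc, hxc⟩ => C'.lower hxc hc.1, fun hx => ?_⟩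
  by_cases hxC : x ∈ C
  · exact ⟨b, ⟨hbC', hbC⟩, le_of_not_ge fun hbx => hbC (C.lower hbx hxC)⟩
  · exact ⟨x, ⟨hx, hxC⟩, le_rfl⟩

theorem Set.OrdConnected.upperEdge_sdiff_lowerEdge {B : Set α} (hB : B.OrdConnected) :
    (upperEdge B : Set α) \ lowerEdge B = B := by
  ext x
  simp only [Set.mem_sdiff, SetLike.mem_coe, mem_upperEdge, mem_lowerEdge, not_forall, not_lt]
  refine ⟨fun ⟨⟨c, hc, hxc⟩, b, hb, hbx⟩ => hB.out hb hc ⟨hbx, hxc⟩, fun hx => ?_⟩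
  exact ⟨⟨x, hx, le_rfl⟩, x, hx, le_rfl⟩

theorem Set.Nonempty.lowerEdge_le_upperEdge {B : Set α} (hB : B.Nonempty) :
    lowerEdge B ≤ upperEdge B := by
  obtain ⟨b, hb⟩ := hB
  exact LowerSet.coe_subset_coe.mp fun x hx => ⟨b, hb, (hx b hb).le⟩

end Edges

section Gaps

variable {F : Type*} [Field F] [LinearOrder F] [IsStrictOrderedRing F]

theorem existsUnique_isBall_edges {C1 C2 : LowerSet F} (hlt : C1 < C2)
    (hgap : IsReflectionClosed ((C2 : Set F) \ C1)) :
    ∃! B : Set F, IsBall B ∧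
      ((C1 = lowerEdge B ∧ C2 = upperEdge B) ∨ (C2 = lowerEdge B ∧ C1 = upperEdge B)) := by
  have hne : ((C2 : Set F) \ C1).Nonempty := LowerSet.exists_mem_not_mem_of_lt hlt
  have hconv : ((C2 : Set F) \ C1).OrdConnected :=
    C2.lower.ordConnected.inter C1.lower.compl.ordConnected
  refine ⟨_, ⟨isBall_of_isReflectionClosed hne hgap hconv,
    .inl ⟨(lowerEdge_sdiff hlt).symm, (upperEdge_sdiff hlt).symm⟩⟩, ?_⟩
  rintro B ⟨hB, ⟨rfl, rfl⟩ | ⟨rfl, rfl⟩⟩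
  · exact hB.ordConnected.upperEdge_sdiff_lowerEdge.symm
  · exact absurd hB.nonempty.lowerEdge_le_upperEdge hlt.not_ge

theorem not_isReflectionClosed_sdiff {A B C : LowerSet F} (hAB : A < B) (hBC : B < C)
    (hB : IsReflectionClosed ((B : Set F) \ A)) : ¬ IsReflectionClosed ((C : Set F) \ A) := by
  intro hC
  obtain ⟨a, haB, haA⟩ := LowerSet.exists_mem_not_mem_of_lt hAB
  obtain ⟨b, hbC, hbB⟩ := LowerSet.exists_mem_not_mem_of_lt hBC
  have hab : a ≤ b := le_of_not_ge fun hba => hbB (B.lower hba haB)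
  have haC : a ∈ C := LowerSet.coe_subset_coe.mpr hBC.le haB
  have hbA : b ∉ A := fun h => hbB (LowerSet.coe_subset_coe.mpr hAB.le h)
  have hrefl : 2 * a - b ∈ (C : Set F) \ A := hC b ⟨hbC, hbA⟩ a ⟨haC, haA⟩
  have hreflB : 2 * a - b ∈ (B : Set F) \ A := ⟨B.lower (by linarith) haB, hrefl.2⟩
  exact hbB (by simpa using (hB _ hreflB a ⟨haB, haA⟩).1)

end Gaps

section RationalFunctions

variable {R : Type*} [Field R]

/-- `P = χ(C)`. -/
def RealizesCut [LinearOrder R] (P : Set (RatFunc R)) (C : LowerSet R) : Prop :=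
  ∀ d : R, RatFunc.X - RatFunc.C d ∈ P ↔ d ∈ C

theorem RatFunc.X_sub_C_ne_zero (d : R) : (RatFunc.X : RatFunc R) - RatFunc.C d ≠ 0 := by
  rw [← RatFunc.algebraMap_X, ← RatFunc.algebraMap_C, ← map_sub]
  exact (map_ne_zero_iff _ (RatFunc.algebraMap_injective R)).mpr (Polynomial.X_sub_C_ne_zero d)

theorem IsOrdering.map_mem_of_pos {L : Type*} [Field L] [LinearOrder R]
    (hsq : ∀ x : R, 0 ≤ x → ∃ y : R, y * y = x) {P : Set L} (hP : IsOrdering P) (φ : R →+* L)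
    {r : R} (hr : 0 < r) : φ r ∈ P := by
  obtain ⟨s, rfl⟩ := hsq r hr.le
  rw [map_mul]
  exact hP.mul_self_mem ((map_ne_zero φ).mpr fun hs => hr.ne' (by simp [hs]))

theorem RealizesCut.C_sub_X_mem [LinearOrder R] {P : Set (RatFunc R)} {C : LowerSet R}
    (hc : RealizesCut P C) (hP : IsOrdering P) {d : R} (hd : d ∉ C) :
    RatFunc.C d - RatFunc.X ∈ P := by
  simpa using hP.neg_mem_of_not_mem (RatFunc.X_sub_C_ne_zero d) (mt (hc d).mp hd)

variable [LinearOrder R] [IsStrictOrderedRing R]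

/-- For `b < a` the roles of the two orderings are exchanged and `y` is replaced by `-y`. -/
theorem isReflectionClosed_sdiff (hsq : ∀ x : R, 0 ≤ x → ∃ y : R, y * y = x)
    {P Q : Set (RatFunc R)} {D D' : LowerSet R} (hP : IsOrdering P) (hQ : IsOrdering Q)
    (hcP : RealizesCut P D) (hcQ : RealizesCut Q D') (heq : assocPlace P = assocPlace Q) :
    IsReflectionClosed ((D' : Set R) \ D) := by
  have pos {S : Set (RatFunc R)} (hS : IsOrdering S) {u v : R} (huv : u < v) :
      RatFunc.C v - RatFunc.C u ∈ S := by
    rw [← map_sub]; exact hS.map_mem_of_pos hsq _ (sub_pos.mpr huv)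
  have hC2 (a b : R) : RatFunc.C (2 * b - a) = 2 * RatFunc.C b - RatFunc.C a := by
    rw [map_sub, map_mul, map_ofNat]
  rintro a ⟨haD', haD⟩ b ⟨hbD', hbD⟩
  rcases lt_trichotomy a b with hab | rfl | hba
  · refine ⟨by_contra fun h => ?_, fun h => hbD (D.lower (by linarith) h)⟩
    refine assocPlace_ne_of_reflection hP hQ (x := RatFunc.X) (pos hP hab) (pos hQ hab)
      ((hcQ b).mpr hbD') ?_ (hcP.C_sub_X_mem hP haD) heq
    simpa [hC2] using hcQ.C_sub_X_mem hQ h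
  · simpa [two_mul] using ⟨haD', haD⟩
  · refine ⟨D'.lower (by linarith) hbD', fun h => ?_⟩
    refine assocPlace_ne_of_reflection hQ hP (x := -RatFunc.X) (a := -RatFunc.C a)
      (b := -RatFunc.C b) ?_ ?_ ?_ ?_ ?_ heq.symm
    · simpa [neg_add_eq_sub] using pos hQ hba
    · simpa [neg_add_eq_sub] using pos hP hba
    · simpa [neg_add_eq_sub] using hcP.C_sub_X_mem hP hbD
    · convert (hcP _).mpr h using 1
      rw [hC2]; ring
    · simpa [neg_add_eq_sub] using (hcQ a).mpr haD'

end RationalFunctions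

theorem glued_cuts_are_ball_edges_general {R : Type*} [Field R] [LinearOrder R] [IsStrictOrderedRing R]
    (hsq : ∀ x : R, 0 ≤ x → ∃ y : R, y * y = x)
    (C1 C2 : LowerSet R) (P1 P2 : Set (RatFunc R))
    (hP1 : IsOrdering P1) (hP2 : IsOrdering P2)
    (hc1 : ∀ d : R, (RatFunc.X - RatFunc.C d) ∈ P1 ↔ d ∈ C1)
    (hc2 : ∀ d : R, (RatFunc.X - RatFunc.C d) ∈ P2 ↔ d ∈ C2)
    (hne : C1 ≠ C2) (heq : assocPlace P1 = assocPlace P2) :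
    (∃! B : Set R, IsBall B ∧
      ((C1 = lowerEdge B ∧ C2 = upperEdge B) ∨ (C2 = lowerEdge B ∧ C1 = upperEdge B))) ∧
    ∀ (P3 : Set (RatFunc R)) (C3 : LowerSet R), IsOrdering P3 →
      (∀ d : R, (RatFunc.X - RatFunc.C d) ∈ P3 ↔ d ∈ C3) →
      assocPlace P3 = assocPlace P1 → C3 = C1 ∨ C3 = C2 := by
  wlog hlt : C1 < C2 generalizing C1 C2 P1 P2
  · obtain ⟨hball, hfiber⟩ := this C2 C1 P2 P1 hP2 hP1 hc2 hc1 hne.symm heq.symm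
      (hne.lt_or_gt.resolve_left hlt)
    exact ⟨(existsUnique_congr fun _ => and_congr_right' or_comm).mp hball,
      fun P3 C3 hP3 hc3 h31 => (hfiber P3 C3 hP3 hc3 (h31.trans heq)).symm⟩
  have gap := @isReflectionClosed_sdiff R _ _ _ hsq
  refine ⟨existsUnique_isBall_edges hlt (gap hP1 hP2 hc1 hc2 heq), ?_⟩
  intro P3 C3 hP3 hc3 h31
  have h32 := h31.trans heq
  rcases lt_trichotomy C3 C1 with hlt31 | rfl | hlt13
  · exact (not_isReflectionClosed_sdiff hlt31 hlt (gap hP3 hP1 hc3 hc1 h31)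
      (gap hP3 hP2 hc3 hc2 h32)).elim
  · exact .inl rfl
  rcases lt_trichotomy C3 C2 with hlt32 | rfl | hlt23
  · exact (not_isReflectionClosed_sdiff hlt13 hlt32 (gap hP1 hP3 hc1 hc3 h31.symm)
      (gap hP1 hP2 hc1 hc2 heq)).elim
  · exact .inr rfl
  · exact (not_isReflectionClosed_sdiff hlt hlt23 (gap hP1 hP2 hc1 hc2 heq)
      (gap hP1 hP3 hc1 hc3 h31.symm)).elim

/-- let `R` be a real closed field and `C₁ ≠ C₂` cuts in `R` whose associated
orderings `χ(C₁), χ(C₂)` of `R(y)` (characterized by `y - d > 0 ↔ d` in the left part of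
the cut) induce the same `ℝ`-place.  Then `{C₁, C₂} = {B⁻, B⁺}` for a uniquely determined
ball `B` in `R`; and in particular any ordering of `R(y)` inducing this same `ℝ`-place has
cut `C₁` or `C₂`, so each fiber of `λ` contains at most two orderings. -/
theorem glued_cuts_are_ball_edges {R : Type*} [Field R] [LinearOrder R] [IsStrictOrderedRing R]
    (hsq : ∀ x : R, 0 ≤ x → ∃ y : R, y * y = x)
    (hodd : ∀ p : Polynomial R, Odd p.natDegree → ∃ x : R, p.IsRoot x)
    (C1 C2 : LowerSet R) (P1 P2 : Set (RatFunc R))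
    (hP1 : IsOrdering P1) (hP2 : IsOrdering P2)
    (hc1 : ∀ d : R, (RatFunc.X - RatFunc.C d) ∈ P1 ↔ d ∈ C1)
    (hc2 : ∀ d : R, (RatFunc.X - RatFunc.C d) ∈ P2 ↔ d ∈ C2)
    (hne : C1 ≠ C2) (heq : assocPlace P1 = assocPlace P2) :
    (∃! B : Set R, IsBall B ∧
      ((C1 = lowerEdge B ∧ C2 = upperEdge B) ∨ (C2 = lowerEdge B ∧ C1 = upperEdge B))) ∧
    ∀ (P3 : Set (RatFunc R)) (C3 : LowerSet R), IsOrdering P3 →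
      (∀ d : R, (RatFunc.X - RatFunc.C d) ∈ P3 ↔ d ∈ C3) →
      assocPlace P3 = assocPlace P1 → C3 = C1 ∨ C3 = C2 :=
  glued_cuts_are_ball_edges_general hsq C1 C2 P1 P2 hP1 hP2 hc1 hc2 hne heq
end
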